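/- Strong internal sets are open in the sharp topology: let (A_ε)_{ε∈(0,1]} be a family of subsets of ℝ^n with nonempty complements and let ⟨A_ε⟩ denote the set of generalized points of ℝ̃^n having a representative (x_ε) that belongs strongly to (A_ε) (i.e. x_ε ∈ A_ε eventually and every equivalent representative lies in A_ε eventually). Then for every x ∈ ⟨A_ε⟩ there exists r ∈ ℝ such that every generalized point y with ‖y − x‖ < e^{−r} also lies in ⟨A_ε⟩; hence ⟨A_ε⟩ is open for the ultrametric D(x,y)=‖x−y‖. -/

import Mathlib

open Set
open scoped Classical

noncomputable section

/-!
STATEMENT 17: Strong internal sets are open in the sharp topology: if `(A_ε)` is a family of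
subsets of `ℝ^n` with nonempty complements, then for every generalized point `x` whose
representative belongs strongly to `(A_ε)` there exists `r ∈ ℝ` such that every generalized
point `y` with `‖y − x‖ < e^{−r}` also lies in the strong internal set `⟨A_ε⟩`; hence
`⟨A_ε⟩` is open for the sharp ultrametric `D(x,y) = ‖x−y‖`.  (Strong membership is invariant
under changing the representative, so the statement is phrased on representatives.)
-/

/-- A property `P` of `ε` holds *eventually* if it holds for all `ε` in some interval `(0, η]`
with `η ∈ (0,1]`. -/
def Ev (P : ℝ → Prop) : Prop :=
  ∃ η : ℝ, 0 < η ∧ η ≤ 1 ∧ ∀ ε : ℝ, 0 < ε → ε ≤ η → P ε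

/-- A net of points of `ℝ^n` is *moderate* if `‖x ε‖ ≤ ε^(-N)` eventually, for some `N`. -/
def ModerateV {n : ℕ} (x : ℝ → EuclideanSpace ℝ (Fin n)) : Prop :=
  ∃ N : ℕ, Ev fun ε => ‖x ε‖ ≤ (ε ^ N)⁻¹

/-- A net of points of `ℝ^n` is *negligible* if `‖x ε‖ ≤ ε^q` eventually, for every `q`. -/
def NegligibleV {n : ℕ} (x : ℝ → EuclideanSpace ℝ (Fin n)) : Prop :=
  ∀ q : ℕ, Ev fun ε => ‖x ε‖ ≤ ε ^ q

/-- The set whose supremum is the valuation `V x`. -/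
def VsetV {n : ℕ} (x : ℝ → EuclideanSpace ℝ (Fin n)) : Set ℝ :=
  {r : ℝ | Ev fun ε => ‖x ε‖ ≤ ε ^ r}

/-- The sharp norm `‖x‖ = e^{-V x}`, with value `0` when `V x = ∞`. -/
noncomputable def vnormV {n : ℕ} (x : ℝ → EuclideanSpace ℝ (Fin n)) : ℝ :=
  if BddAbove (VsetV x) then Real.exp (-sSup (VsetV x)) else 0

/-- `(x_ε)` belongs *strongly* to the net of sets `(A_ε)`: `x_ε ∈ A_ε` eventually, and the
same holds for every moderate net equivalent to `(x_ε)` modulo negligible nets; the strong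
internal set `⟨A_ε⟩` consists of the generalized points whose representatives belong strongly
to `(A_ε)`. -/
def StrongMem {n : ℕ} (A : ℝ → Set (EuclideanSpace ℝ (Fin n)))
    (x : ℝ → EuclideanSpace ℝ (Fin n)) : Prop :=
  (Ev fun ε => x ε ∈ A ε) ∧
  ∀ y : ℝ → EuclideanSpace ℝ (Fin n), ModerateV y →
    NegligibleV (fun ε => x ε - y ε) → Ev fun ε => y ε ∈ A ε

/-!
If `x` belongs strongly to `(A_ε)`, then for some `m` the closed ball of radius `ε^m` around
`x_ε` lies in `A_ε` for all small `ε`: otherwise one can push `x` out of `A` along a sequence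
`ε_m → 0` by perturbations of size `ε_m^m`, which together form a negligible net. Any `y` with
`‖y - x‖ < e^{-(m+1)}` satisfies `‖y_ε - x_ε‖ ≤ ε^{m+1}` eventually, so the balls of radius
`ε^{m+1}` around `y_ε` stay in `A_ε`, and such a ball condition implies strong membership.
-/

open Filter Topology

lemma ev_iff_eventually_nhdsGT {P : ℝ → Prop} : Ev P ↔ ∀ᶠ ε in 𝓝[>] (0 : ℝ), P ε := by
  refine ⟨fun ⟨η, hη, _, hP⟩ => ?_, fun h => ?_⟩
  · exact mem_nhdsGT_iff_exists_Ioc_subset.2 ⟨η, hη, fun ε hε => hP ε hε.1 hε.2⟩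
  · obtain ⟨u, hu, hP⟩ := mem_nhdsGT_iff_exists_Ioc_subset.1 h
    exact ⟨min u 1, lt_min hu one_pos, min_le_right u 1,
      fun ε hε hεu => hP ⟨hε, hεu.trans (min_le_left u 1)⟩⟩

section Nets

variable {n : ℕ}

lemma ModerateV.of_negligible_sub {x y : ℝ → EuclideanSpace ℝ (Fin n)} (hx : ModerateV x)
    (hxy : NegligibleV fun ε => x ε - y ε) : ModerateV y := by
  obtain ⟨N, hN⟩ := hx
  refine ⟨N + 1, ev_iff_eventually_nhdsGT.2 ?_⟩
  filter_upwards [ev_iff_eventually_nhdsGT.1 hN, ev_iff_eventually_nhdsGT.1 (hxy 0),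
    Ioo_mem_nhdsGT (by norm_num : (0 : ℝ) < 1 / 2)] with ε hxε hxyε ⟨hε, hε2⟩
  have hinv : 1 ≤ (ε ^ N)⁻¹ := one_le_inv₀ (by positivity) |>.2 (pow_le_one₀ hε.le (by linarith))
  have htwo : 2 ≤ ε⁻¹ := by rw [le_inv_comm₀ two_pos hε]; linarith
  calc ‖y ε‖ = ‖x ε - (x ε - y ε)‖ := by rw [sub_sub_cancel]
    _ ≤ ‖x ε‖ + ‖x ε - y ε‖ := norm_sub_le _ _
    _ ≤ (ε ^ N)⁻¹ + 1 := by simpa using add_le_add hxε hxyε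
    _ ≤ ε⁻¹ * (ε ^ N)⁻¹ := by nlinarith
    _ = (ε ^ (N + 1))⁻¹ := by rw [pow_succ, mul_inv, mul_comm]

lemma eventually_norm_le_pow_of_vnormV_lt {x : ℝ → EuclideanSpace ℝ (Fin n)} {q : ℕ}
    (h : vnormV x < Real.exp (-q)) : ∀ᶠ ε in 𝓝[>] (0 : ℝ), ‖x ε‖ ≤ ε ^ q := by
  have hs : ∃ s ∈ VsetV x, (q : ℝ) < s := by
    by_cases hb : BddAbove (VsetV x)
    · rw [vnormV, if_pos hb, Real.exp_lt_exp, neg_lt_neg_iff] at h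
      have hne : (VsetV x).Nonempty := by
        by_contra hempty
        rw [Set.not_nonempty_iff_eq_empty.1 hempty, Real.sSup_empty] at h
        exact (Nat.cast_nonneg q).not_gt h
      exact exists_lt_of_lt_csSup hne h
    · simpa using not_bddAbove_iff.1 hb q
  obtain ⟨s, hs, hqs⟩ := hs
  filter_upwards [ev_iff_eventually_nhdsGT.1 hs, Ioo_mem_nhdsGT one_pos]
    with ε hxε ⟨hε, hε1⟩
  calc ‖x ε‖ ≤ ε ^ s := hxε
    _ ≤ ε ^ (q : ℝ) := Real.rpow_le_rpow_of_exponent_ge hε hε1.le hqs.le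
    _ = ε ^ q := Real.rpow_natCast ε q

variable {A : ℝ → Set (EuclideanSpace ℝ (Fin n))}

lemma StrongMem.of_eventually_closedBall_subset {x : ℝ → EuclideanSpace ℝ (Fin n)} {m : ℕ}
    (h : ∀ᶠ ε in 𝓝[>] (0 : ℝ), Metric.closedBall (x ε) (ε ^ m) ⊆ A ε) : StrongMem A x := by
  refine ⟨ev_iff_eventually_nhdsGT.2 ?_, fun y _ hxy => ev_iff_eventually_nhdsGT.2 ?_⟩
  · filter_upwards [h, Ioo_mem_nhdsGT one_pos] with ε hball ⟨hε, _⟩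
    exact hball (Metric.mem_closedBall_self (by positivity))
  · filter_upwards [h, ev_iff_eventually_nhdsGT.1 (hxy m)] with ε hball hxyε
    exact hball (by rwa [Metric.mem_closedBall', dist_eq_norm])

lemma eventually_closedBall_subset_of_norm_sub_le {x y : ℝ → EuclideanSpace ℝ (Fin n)} {m : ℕ}
    (hx : ∀ᶠ ε in 𝓝[>] (0 : ℝ), Metric.closedBall (x ε) (ε ^ m) ⊆ A ε)
    (hxy : ∀ᶠ ε in 𝓝[>] (0 : ℝ), ‖y ε - x ε‖ ≤ ε ^ (m + 1)) :
    ∀ᶠ ε in 𝓝[>] (0 : ℝ), Metric.closedBall (y ε) (ε ^ (m + 1)) ⊆ A ε := by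
  filter_upwards [hx, hxy, Ioo_mem_nhdsGT (by norm_num : (0 : ℝ) < 1 / 2)]
    with ε hball hxyε ⟨hε, hε2⟩ z hz
  refine hball ?_
  rw [Metric.mem_closedBall, dist_eq_norm] at hz ⊢
  have hpow : ε ^ (m + 1) ≤ ε ^ m / 2 := by
    rw [pow_succ]; nlinarith [pow_pos hε m]
  calc ‖z - x ε‖ = ‖(z - y ε) + (y ε - x ε)‖ := by rw [sub_add_sub_cancel]
    _ ≤ ‖z - y ε‖ + ‖y ε - x ε‖ := norm_add_le _ _
    _ ≤ ε ^ m := by linarith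

-- Where `t` repeats a value, the least index wins.
def replaceAlong (x : ℝ → EuclideanSpace ℝ (Fin n)) (t : ℕ → ℝ)
    (z : ℕ → EuclideanSpace ℝ (Fin n)) (ε : ℝ) : EuclideanSpace ℝ (Fin n) :=
  if h : ∃ m, t m = ε then z (Nat.find h) else x ε

section replaceAlong

variable {x : ℝ → EuclideanSpace ℝ (Fin n)} {t : ℕ → ℝ} {z : ℕ → EuclideanSpace ℝ (Fin n)}

lemma exists_replaceAlong_apply_eq (m : ℕ) : ∃ k, t k = t m ∧ replaceAlong x t z (t m) = z k := by
  have h : ∃ k, t k = t m := ⟨m, rfl⟩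
  exact ⟨Nat.find h, Nat.find_spec h, dif_pos h⟩

lemma negligibleV_sub_replaceAlong (ht : ∀ m, 0 < t m)
    (hz : ∀ m, ‖x (t m) - z m‖ ≤ t m ^ m) :
    NegligibleV fun ε => x ε - replaceAlong x t z ε := by
  intro q
  rw [ev_iff_eventually_nhdsGT]
  have hsmall : ∀ᶠ ε in 𝓝[>] (0 : ℝ), ∀ m ∈ Finset.range q, ε ∈ Ioo 0 (t m) :=
    (eventually_all_finset _).2 fun m _ => Ioo_mem_nhdsGT (ht m)
  filter_upwards [hsmall, Ioo_mem_nhdsGT one_pos] with ε hεt ⟨hε, hε1⟩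
  by_cases h : ∃ m, t m = ε
  · have hq : q ≤ Nat.find h := by
      by_contra! hlt
      exact (hεt _ (Finset.mem_range.2 hlt)).2.ne' (Nat.find_spec h)
    calc ‖x ε - replaceAlong x t z ε‖ ≤ ε ^ Nat.find h := by
          simpa only [replaceAlong, dif_pos h, Nat.find_spec h] using hz (Nat.find h)
      _ ≤ ε ^ q := pow_le_pow_of_le_one hε.le hε1.le hq
  · simp only [replaceAlong, dif_neg h, sub_self, norm_zero]
    positivity

end replaceAlong

lemma StrongMem.exists_eventually_closedBall_subset {x : ℝ → EuclideanSpace ℝ (Fin n)}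
    (hxm : ModerateV x) (hx : StrongMem A x) :
    ∃ m : ℕ, ∀ᶠ ε in 𝓝[>] (0 : ℝ), Metric.closedBall (x ε) (ε ^ m) ⊆ A ε := by
  by_contra! hfreq
  have hpick (m : ℕ) : ∃ ε : ℝ, ε ∈ Ioo (0 : ℝ) (1 / (m + 1)) ∧
      ∃ z ∈ Metric.closedBall (x ε) (ε ^ m), z ∉ A ε := by
    obtain ⟨ε, hεA, hε⟩ := ((hfreq m).and_eventually
      (Ioo_mem_nhdsGT (by positivity : (0 : ℝ) < 1 / (m + 1)))).exists
    exact ⟨ε, hε, Set.not_subset.1 hεA⟩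
  choose t ht z hz hzA using hpick
  have ht_tendsto : Tendsto t atTop (𝓝[>] 0) := by
    refine tendsto_nhdsWithin_iff.2 ⟨?_, Eventually.of_forall fun m => (ht m).1⟩
    exact squeeze_zero (fun m => (ht m).1.le) (fun m => (ht m).2.le)
      tendsto_one_div_add_atTop_nhds_zero_nat
  have hneg : NegligibleV fun ε => x ε - replaceAlong x t z ε :=
    negligibleV_sub_replaceAlong (fun m => (ht m).1) fun m => by
      simpa [Metric.mem_closedBall, dist_eq_norm, norm_sub_rev] using hz m
  obtain ⟨m, hm⟩ := (ht_tendsto.eventually <| ev_iff_eventually_nhdsGT.1 <|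
    hx.2 _ (hxm.of_negligible_sub hneg) hneg).exists
  obtain ⟨k, htk, hyk⟩ := exists_replaceAlong_apply_eq (x := x) (z := z) m
  rw [hyk, ← htk] at hm
  exact hzA k hm

end Nets

theorem strong_internal_set_open_general (n : ℕ)
    (A : ℝ → Set (EuclideanSpace ℝ (Fin n))) :
    ∀ x : ℝ → EuclideanSpace ℝ (Fin n), ModerateV x → StrongMem A x →
      ∃ r : ℝ, ∀ y : ℝ → EuclideanSpace ℝ (Fin n), ModerateV y →
        vnormV (fun ε => y ε - x ε) < Real.exp (-r) → StrongMem A y := by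
  intro x hxm hx
  obtain ⟨m, hm⟩ := hx.exists_eventually_closedBall_subset hxm
  refine ⟨((m + 1 : ℕ) : ℝ), fun y _ hyx => ?_⟩
  exact StrongMem.of_eventually_closedBall_subset
    (eventually_closedBall_subset_of_norm_sub_le hm (eventually_norm_le_pow_of_vnormV_lt hyx))

theorem strong_internal_set_open (n : ℕ)
    (A : ℝ → Set (EuclideanSpace ℝ (Fin n)))
    (hA : ∀ ε ∈ Ioc (0:ℝ) 1, ((A ε)ᶜ).Nonempty) :
    ∀ x : ℝ → EuclideanSpace ℝ (Fin n), ModerateV x → StrongMem A x →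
      ∃ r : ℝ, ∀ y : ℝ → EuclideanSpace ℝ (Fin n), ModerateV y →
        vnormV (fun ε => y ε - x ε) < Real.exp (-r) → StrongMem A y :=
  strong_internal_set_open_general n A
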